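/- Let g : R^n → C^(n) be measurable with χ₊(ξ)g(ξ) measurable, and suppose for 1 < p ≤ 2 and q = p/(p-1) that for every x₀ > 0 one has the slice bound (∫_{R^n} |χ₊(ξ)g(ξ)|^q e^{-2πx₀ q|ξ|} dξ)^{1/q} ≤ (∫_{R^n} |F(x₀+x̲)|^p dx̲)^{1/p}. Then (∫_{R^n} |χ₊(ξ)g(ξ)|^q (2πp|ξ|)^{-q/p} dξ)^{1/q} ≤ (∫₀^∞ ∫_{R^n} |F(x₀+x̲)|^p dx̲ dx₀)^{1/p}. -/

import Mathlib

/-!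
Since `∫₀^∞ e^{-2π x₀ p |ξ|} dx₀ = (2πp|ξ|)⁻¹`, the integrand on the left is
`(∫₀^∞ G(ξ)^p e^{-2π x₀ p |ξ|} dx₀)^{q/p}`. Minkowski's integral inequality with exponent
`q/p = 1/(p-1) ≥ 1` moves the `L^{q/p}(dξ)` norm inside the `x₀`-integral, where it is the
`p`-th power of the slice norm, bounded by hypothesis.

Minkowski's inequality for `ℝ≥0∞`-valued integrands is proved by duality: for `g ≤ ∫ f(a, ·) dμ`
with `∫ g^r < ∞`, Hölder gives `∫ g^r ≤ (∫ g^r)^{1/r'} ∫ ‖f(a, ·)‖_r dμ`, and σ-finiteness lets such `g`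
exhaust `(∫ f(a, ·) dμ)^r`.
-/

open MeasureTheory Real

/-- Euclidean norm |ξ| on ℝⁿ. -/
noncomputable def nrm {n : ℕ} (ξ : Fin n → ℝ) : ℝ := Real.sqrt (∑ i, ξ i ^ 2)

open scoped ENNReal

namespace ENNReal

theorem le_rpow_of_le_rpow_mul {X M : ℝ≥0∞} {r r' : ℝ} (hr : r.HolderConjugate r')
    (hX : X ≠ ∞) (h : X ≤ X ^ (1 / r') * M) : X ≤ M ^ r := by
  obtain rfl | hX0 := eq_or_ne X 0
  · exact zero_le
  have hsplit : (1 : ℝ) / r = 1 + -(1 / r') := by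
    have := hr.inv_add_inv_eq_one
    rw [one_div, one_div]; linarith
  have hroot : X ^ (1 / r) ≤ M :=
    calc X ^ (1 / r) = X * X ^ (-(1 / r')) := by
          rw [hsplit, ENNReal.rpow_add _ _ hX0 hX, ENNReal.rpow_one]
      _ ≤ X ^ (1 / r') * M * X ^ (-(1 / r')) := by gcongr
      _ = M := by
          rw [mul_comm, ← mul_assoc, ← ENNReal.rpow_add _ _ hX0 hX, neg_add_cancel,
            ENNReal.rpow_zero, one_mul]
  calc X = (X ^ (1 / r)) ^ r := by rw [one_div, ENNReal.rpow_inv_rpow hr.ne_zero]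
    _ ≤ M ^ r := by gcongr; exact hr.nonneg

end ENNReal

section Minkowski

variable {α β : Type*} [MeasurableSpace α] [MeasurableSpace β] {μ : Measure α} {ν : Measure β}

theorem lintegral_le_of_forall_le_of_lintegral_ne_top [SigmaFinite ν] {f : β → ℝ≥0∞} {C : ℝ≥0∞}
    (h : ∀ g : β → ℝ≥0∞, Measurable g → g ≤ f → ∫⁻ b, g b ∂ν ≠ ∞ → ∫⁻ b, g b ∂ν ≤ C) :
    ∫⁻ b, f b ∂ν ≤ C := by
  refine lintegral_le_of_forall_fin_meas_le C fun s hs hνs => ?_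
  rw [lintegral_eq_nnreal]
  refine iSup₂_le fun φ hφ => ?_
  obtain ⟨c, hc⟩ := φ.range.bddAbove
  have hφs : ∫⁻ b in s, φ b ∂ν ≠ ∞ :=
    (setLIntegral_lt_top_of_le_nnreal hνs ⟨c, fun b _ => by
      exact_mod_cast hc (φ.mem_range_self b)⟩).ne
  rw [← SimpleFunc.lintegral_eq_lintegral]
  simp only [SimpleFunc.coe_map, Function.comp_apply]
  rw [← lintegral_indicator hs] at hφs ⊢
  exact h _ (φ.measurable.coe_nnreal_ennreal.indicator hs)
    (fun b => (Set.indicator_le_self _ _ b).trans (hφ b)) hφs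

variable [SFinite μ] {f : α → β → ℝ≥0∞} {r r' : ℝ}

theorem lintegral_rpow_le_rpow_mul_of_le_lintegral [SFinite ν]
    (hf : Measurable (Function.uncurry f)) (hr : r.HolderConjugate r') {g : β → ℝ≥0∞}
    (hg : Measurable g) (hgf : ∀ b, g b ≤ ∫⁻ a, f a b ∂μ) :
    ∫⁻ b, g b ^ r ∂ν ≤
      (∫⁻ b, g b ^ r ∂ν) ^ (1 / r') * ∫⁻ a, (∫⁻ b, f a b ^ r ∂ν) ^ (1 / r) ∂μ := by
  have hr1 : 0 ≤ r - 1 := by linarith [hr.lt]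
  calc ∫⁻ b, g b ^ r ∂ν = ∫⁻ b, g b ^ (r - 1) * g b ∂ν := by
        refine lintegral_congr fun b => ?_
        simpa using ENNReal.rpow_add_of_nonneg (x := g b) _ _ hr1 zero_le_one
    _ ≤ ∫⁻ b, g b ^ (r - 1) * ∫⁻ a, f a b ∂μ ∂ν := by gcongr with b; exact hgf b
    _ = ∫⁻ b, ∫⁻ a, g b ^ (r - 1) * f a b ∂μ ∂ν := by
        refine lintegral_congr fun b => (lintegral_const_mul _ ?_).symm
        exact hf.comp (measurable_id.prodMk measurable_const)
    _ = ∫⁻ a, ∫⁻ b, g b ^ (r - 1) * f a b ∂ν ∂μ :=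
        lintegral_lintegral_swap
          (((hg.comp measurable_fst).pow_const _).mul (hf.comp measurable_swap)).aemeasurable
    _ ≤ ∫⁻ a, (∫⁻ b, (g b ^ (r - 1)) ^ r' ∂ν) ^ (1 / r') * (∫⁻ b, f a b ^ r ∂ν) ^ (1 / r) ∂μ :=
        lintegral_mono fun a => ENNReal.lintegral_mul_le_Lp_mul_Lq ν hr.symm
          (hg.pow_const _).aemeasurable
          (hf.comp (measurable_const.prodMk measurable_id)).aemeasurable
    _ = (∫⁻ b, g b ^ r ∂ν) ^ (1 / r') * ∫⁻ a, (∫⁻ b, f a b ^ r ∂ν) ^ (1 / r) ∂μ := by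
        simp only [← ENNReal.rpow_mul, hr.sub_one_mul_conj]
        exact lintegral_const_mul _ ((hf.pow_const r).lintegral_prod_right.pow_const _)

theorem lintegral_lintegral_rpow_le [SigmaFinite ν] (hf : Measurable (Function.uncurry f))
    (hr : 1 ≤ r) :
    (∫⁻ b, (∫⁻ a, f a b ∂μ) ^ r ∂ν) ^ (1 / r) ≤ ∫⁻ a, (∫⁻ b, f a b ^ r ∂ν) ^ (1 / r) ∂μ := by
  obtain rfl | hr := hr.eq_or_lt
  · simpa using (lintegral_lintegral_swap hf.aemeasurable).ge
  have hconj := Real.HolderConjugate.conjExponent hr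
  suffices h : ∫⁻ b, (∫⁻ a, f a b ∂μ) ^ r ∂ν ≤ (∫⁻ a, (∫⁻ b, f a b ^ r ∂ν) ^ (1 / r) ∂μ) ^ r by
    calc _ ≤ _ := ENNReal.rpow_le_rpow h (by positivity)
      _ = _ := by rw [one_div, ENNReal.rpow_rpow_inv hconj.ne_zero]
  refine lintegral_le_of_forall_le_of_lintegral_ne_top fun g hg hgF hg_fin => ?_
  have hroot : ∀ b, (g b ^ (1 / r)) ^ r = g b := fun b => by
    rw [one_div, ENNReal.rpow_inv_rpow hconj.ne_zero]
  rw [← lintegral_congr fun b => hroot b] at hg_fin ⊢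
  refine ENNReal.le_rpow_of_le_rpow_mul hconj hg_fin
    (lintegral_rpow_le_rpow_mul_of_le_lintegral hf hconj (hg.pow_const _) fun b => ?_)
  calc g b ^ (1 / r) ≤ ((∫⁻ a, f a b ∂μ) ^ r) ^ (1 / r) := by gcongr; exact hgF b
    _ = ∫⁻ a, f a b ∂μ := by rw [one_div, ENNReal.rpow_rpow_inv hconj.ne_zero]

end Minkowski

theorem lintegral_exp_mul_Ioi_zero {a : ℝ} (ha : a < 0) :
    ∫⁻ x in Set.Ioi (0 : ℝ), ENNReal.ofReal (exp (a * x)) = ENNReal.ofReal (-a⁻¹) := by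
  rw [← ofReal_integral_eq_lintegral_ofReal (integrableOn_exp_mul_Ioi ha 0)
    (Filter.Eventually.of_forall fun x => (exp_pos _).le), integral_exp_mul_Ioi ha]
  simp [neg_div]

section Bergman

variable {n : ℕ}

theorem nrm_nonneg (ξ : Fin n → ℝ) : 0 ≤ nrm ξ := sqrt_nonneg _

@[fun_prop]
theorem measurable_nrm : Measurable (nrm : (Fin n → ℝ) → ℝ) := by
  unfold nrm; fun_prop

noncomputable def dampedPow (G : (Fin n → ℝ) → ℝ) (p x₀ : ℝ) (ξ : Fin n → ℝ) : ℝ≥0∞ :=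
  ENNReal.ofReal (G ξ ^ p * exp (-(2 * π * x₀ * p * nrm ξ)))

variable {G : (Fin n → ℝ) → ℝ} {p : ℝ}

theorem measurable_dampedPow (hG : Measurable G) :
    Measurable (Function.uncurry (dampedPow G p)) := by
  unfold dampedPow Function.uncurry; fun_prop

theorem dampedPow_rpow {ξ : Fin n → ℝ} (hG : 0 ≤ G ξ) {r : ℝ} (hr : 0 ≤ r) (x₀ : ℝ) :
    dampedPow G p x₀ ξ ^ r = dampedPow G (p * r) x₀ ξ := by
  unfold dampedPow
  rw [ENNReal.ofReal_rpow_of_nonneg (by positivity) hr, mul_rpow (by positivity) (exp_pos _).le,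
    ← rpow_mul hG, ← exp_mul]
  congr 3
  ring

theorem setLIntegral_dampedPow_Ioi {ξ : Fin n → ℝ} (hG : 0 ≤ G ξ) (hp : 0 < p)
    (hξ : 0 < nrm ξ) :
    ∫⁻ x₀ in Set.Ioi 0, dampedPow G p x₀ ξ = ENNReal.ofReal (G ξ ^ p / (2 * π * p * nrm ξ)) := by
  have hc : 0 < 2 * π * p * nrm ξ := by positivity
  have hsplit : ∀ x₀, dampedPow G p x₀ ξ =
      ENNReal.ofReal (G ξ ^ p) * ENNReal.ofReal (exp (-(2 * π * p * nrm ξ) * x₀)) := fun x₀ => by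
    rw [dampedPow, ← ENNReal.ofReal_mul (by positivity)]
    ring_nf
  simp_rw [hsplit]
  rw [lintegral_const_mul' _ _ ENNReal.ofReal_ne_top, lintegral_exp_mul_Ioi_zero (by linarith),
    ← ENNReal.ofReal_mul (by positivity), neg_inv, neg_neg, div_eq_mul_inv]

theorem ofReal_div_rpow_le_setLIntegral_dampedPow (ξ : Fin n → ℝ) (hG : 0 ≤ G ξ) (hp : 0 < p)
    {q : ℝ} (hq : 0 < q) :
    ENNReal.ofReal (G ξ ^ q / (2 * π * p * nrm ξ) ^ (q / p)) ≤
      (∫⁻ x₀ in Set.Ioi 0, dampedPow G p x₀ ξ) ^ (q / p) := by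
  obtain hξ | hξ := (nrm_nonneg ξ).eq_or_lt
  -- At `nrm ξ = 0` the left side is the junk value `G ξ ^ q / 0 = 0`.
  · simp [← hξ, zero_rpow (div_pos hq hp).ne']
  rw [setLIntegral_dampedPow_Ioi hG hp hξ, ENNReal.ofReal_rpow_of_nonneg (by positivity)
    (by positivity), div_rpow (by positivity) (by positivity), ← rpow_mul hG,
    mul_div_cancel₀ _ hp.ne']

theorem lintegral_dampedPow_rpow_rpow_one_div (hG : ∀ ξ, 0 ≤ G ξ) (hp : 0 < p) {r : ℝ}
    (hr : 0 < r) (x₀ : ℝ) :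
    (∫⁻ ξ, dampedPow G p x₀ ξ ^ r) ^ (1 / r) =
      ((∫⁻ ξ, dampedPow G (p * r) x₀ ξ) ^ (1 / (p * r))) ^ p := by
  simp_rw [dampedPow_rpow (hG _) hr.le, ← ENNReal.rpow_mul]
  congr 1
  field_simp

end Bergman

theorem bergman_integrated_bound_general (n : ℕ) (p q : ℝ) (hp1 : 1 < p) (hp2 : p ≤ 2)
    (hq : q = p / (p - 1))
    (G : (Fin n → ℝ) → ℝ) (hGm : Measurable G) (hGpos : ∀ ξ, 0 ≤ G ξ)
    (FN : ℝ → (Fin n → ℝ) → ℝ)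
    (hslice : ∀ x₀ : ℝ, 0 < x₀ →
      (∫⁻ ξ : Fin n → ℝ,
          ENNReal.ofReal (G ξ ^ q * Real.exp (-(2 * π * x₀ * q * nrm ξ)))) ^ (1 / q) ≤
        (∫⁻ x : Fin n → ℝ, ENNReal.ofReal (FN x₀ x ^ p)) ^ (1 / p)) :
    (∫⁻ ξ : Fin n → ℝ,
        ENNReal.ofReal (G ξ ^ q / (2 * π * p * nrm ξ) ^ (q / p))) ^ (1 / q) ≤
      (∫⁻ x₀ : ℝ in Set.Ioi (0 : ℝ),
        ∫⁻ x : Fin n → ℝ, ENNReal.ofReal (FN x₀ x ^ p)) ^ (1 / p) := by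
  have hp0 : 0 < p := by linarith
  have hq0 : 0 < q := by rw [hq]; exact div_pos hp0 (by linarith)
  have hr : 1 ≤ q / p := by
    rw [hq, div_div_cancel_left' hp0.ne', one_le_inv₀ (by linarith)]; linarith
  have hpr : p * (q / p) = q := mul_div_cancel₀ q hp0.ne'
  have hslice' : ∀ x₀ ∈ Set.Ioi (0 : ℝ),
      (∫⁻ ξ, dampedPow G p x₀ ξ ^ (q / p)) ^ (1 / (q / p)) ≤
        ∫⁻ x, ENNReal.ofReal (FN x₀ x ^ p) := fun x₀ hx₀ => by
    rw [lintegral_dampedPow_rpow_rpow_one_div hGpos hp0 (by positivity), hpr]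
    exact (ENNReal.rpow_le_rpow (hslice x₀ hx₀) hp0.le).trans_eq
      (by rw [one_div, ENNReal.rpow_inv_rpow hp0.ne'])
  calc _ = ((∫⁻ ξ, ENNReal.ofReal (G ξ ^ q / (2 * π * p * nrm ξ) ^ (q / p))) ^ (1 / (q / p)))
        ^ (1 / p) := by rw [← ENNReal.rpow_mul]; congr 1; field_simp
    _ ≤ ((∫⁻ ξ, (∫⁻ x₀ in Set.Ioi 0, dampedPow G p x₀ ξ) ^ (q / p)) ^ (1 / (q / p))) ^ (1 / p) := by
        gcongr with ξ
        exact ofReal_div_rpow_le_setLIntegral_dampedPow ξ (hGpos ξ) hp0 hq0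
    _ ≤ (∫⁻ x₀ in Set.Ioi 0, (∫⁻ ξ, dampedPow G p x₀ ξ ^ (q / p)) ^ (1 / (q / p))) ^ (1 / p) := by
        gcongr
        exact lintegral_lintegral_rpow_le (measurable_dampedPow hGm) hr
    _ ≤ _ := ENNReal.rpow_le_rpow (setLIntegral_mono' measurableSet_Ioi hslice') (by positivity)

/-- let G(ξ) = |χ₊(ξ)g(ξ)| ≥ 0 be measurable and, for 1 < p ≤ 2,
q = p/(p-1), suppose the slice bound
(∫ G(ξ)^q e^{-2πx₀q|ξ|} dξ)^{1/q} ≤ (∫ |F(x₀+x̲)|^p dx̲)^{1/p}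
holds for every x₀ > 0 (Hausdorff–Young).  Then
(∫ G(ξ)^q (2πp|ξ|)^{-q/p} dξ)^{1/q} ≤ (∫₀^∞ ∫ |F(x₀+x̲)|^p dx̲ dx₀)^{1/p}. -/
theorem bergman_integrated_bound (n : ℕ) (p q : ℝ) (hp1 : 1 < p) (hp2 : p ≤ 2)
    (hq : q = p / (p - 1))
    (G : (Fin n → ℝ) → ℝ) (hGm : Measurable G) (hGpos : ∀ ξ, 0 ≤ G ξ)
    (FN : ℝ → (Fin n → ℝ) → ℝ) (hFNpos : ∀ x₀ x, 0 ≤ FN x₀ x)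
    (hFNm : Measurable (fun z : ℝ × (Fin n → ℝ) => FN z.1 z.2))
    (hslice : ∀ x₀ : ℝ, 0 < x₀ →
      (∫⁻ ξ : Fin n → ℝ,
          ENNReal.ofReal (G ξ ^ q * Real.exp (-(2 * π * x₀ * q * nrm ξ)))) ^ (1 / q) ≤
        (∫⁻ x : Fin n → ℝ, ENNReal.ofReal (FN x₀ x ^ p)) ^ (1 / p)) :
    (∫⁻ ξ : Fin n → ℝ,
        ENNReal.ofReal (G ξ ^ q / (2 * π * p * nrm ξ) ^ (q / p))) ^ (1 / q) ≤
      (∫⁻ x₀ : ℝ in Set.Ioi (0 : ℝ),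
        ∫⁻ x : Fin n → ℝ, ENNReal.ofReal (FN x₀ x ^ p)) ^ (1 / p) :=
  bergman_integrated_bound_general n p q hp1 hp2 hq G hGm hGpos FN hslice
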